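/- arXiv:1603.02004 — 5 statements merged into one kernel-verified Lean document; each statement's English description precedes it below -/
import Mathlib

section
/- For every u ∈ X, the square root of the predictive variance equals the worst-case interpolation error over the unit ball of the reproducing kernel Hilbert space: k_N(u,u)^{1/2} = sup_{g ∈ H_k, ‖g‖_{H_k} = 1} |g(u) − m_N^g(u)|. -/
open Matrix
open scoped RealInnerProductSpace

/-!
Point evaluations are inner products with kernel sections, so `K` is the Gram matrix of the
sections `k(uⁱ,·)` and the interpolation error `g ↦ g(u) - m_N^g(u)` is the functional `⟪·, h⟫`
with `h = k(u,·) - ∑ᵢ wᵢ k(uⁱ,·)`, `w = K⁻¹ k(u,U)`. Its supremum over the unit sphere is `‖h‖`,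
and expanding `‖h‖²` with `K⁻¹ K K⁻¹ = K⁻¹` gives `k(u,u) - k(u,U)ᵀ K⁻¹ k(u,U) = k_N(u,u)`.
-/

theorem Matrix.nonsing_inv_mul_mul_nonsing_inv {n α : Type*} [Fintype n] [DecidableEq n]
    [CommRing α] (A : Matrix n n α) : A⁻¹ * A * A⁻¹ = A⁻¹ := by
  rcases A.nonsing_inv_cancel_or_zero with ⟨h, -⟩ | h <;> simp [h]

theorem iSup_abs_inner_sphere {E : Type*} [NormedAddCommGroup E] [InnerProductSpace ℝ E] (h : E) :
    ⨆ g : {g : E // ‖g‖ = 1}, |⟪g.1, h⟫| = ‖h‖ := by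
  rw [← innerSL_apply_norm ℝ h, ← (innerSL ℝ h).sSup_sphere_eq_norm, sSup_image']
  exact (Equiv.subtypeEquivRight fun g => mem_sphere_zero_iff_norm.symm).iSup_congr
    fun g => by simp [real_inner_comm]

section GramResidual

variable {E ι : Type*} [NormedAddCommGroup E] [InnerProductSpace ℝ E] (φ : ι → E)

theorem Matrix.isSymm_gram : (gram ℝ φ).IsSymm :=
  IsSymm.ext fun i j => real_inner_comm (φ i) (φ j)

variable [Fintype ι] [DecidableEq ι]

/-- When `gram ℝ φ` is invertible, `x` minus its orthogonal projection onto the span of `φ`. -/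
noncomputable def gramResidual (x : E) : E :=
  x - ∑ i, ((gram ℝ φ)⁻¹ *ᵥ fun j => ⟪x, φ j⟫) i • φ i

theorem inner_gramResidual (g x : E) :
    ⟪g, gramResidual φ x⟫ = ⟪g, x⟫ - (fun i => ⟪x, φ i⟫) ⬝ᵥ ((gram ℝ φ)⁻¹ *ᵥ fun i => ⟪g, φ i⟫) := by
  rw [gramResidual, inner_sub_right, inner_sum, dotProduct_mulVec, ← mulVec_transpose,
    (isSymm_gram φ).inv.eq]
  simp only [real_inner_smul_right, dotProduct]

theorem gram_inv_mulVec_inner_gramResidual (x : E) :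
    (gram ℝ φ)⁻¹ *ᵥ (fun j => ⟪gramResidual φ x, φ j⟫) = 0 := by
  set c : ι → ℝ := fun j => ⟪x, φ j⟫
  have hresidual : (fun j => ⟪gramResidual φ x, φ j⟫) = c - ((gram ℝ φ)⁻¹ *ᵥ c) ᵥ* gram ℝ φ := by
    ext j
    simp only [gramResidual, inner_sub_left, sum_inner, real_inner_smul_left, Pi.sub_apply]
    rfl
  rw [hresidual, ← mulVec_transpose, (isSymm_gram φ).eq, mulVec_sub, mulVec_mulVec, mulVec_mulVec,
    nonsing_inv_mul_mul_nonsing_inv, sub_self]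

theorem norm_gramResidual_sq (x : E) :
    ‖gramResidual φ x‖ ^ 2 =
      ⟪x, x⟫ - (fun i => ⟪x, φ i⟫) ⬝ᵥ ((gram ℝ φ)⁻¹ *ᵥ fun i => ⟪x, φ i⟫) := by
  rw [← real_inner_self_eq_norm_sq, inner_gramResidual, gram_inv_mulVec_inner_gramResidual,
    dotProduct_zero, sub_zero, real_inner_comm, inner_gramResidual]

end GramResidual

theorem predictive_stddev_eq_sup_unit_ball_interpolation_error_general
    {X : Type*} (k : X → X → ℝ)
    {H : Type*} [NormedAddCommGroup H] [InnerProductSpace ℝ H]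
    (ι : H →ₗ[ℝ] X → ℝ)
    (Ksec : X → H)
    (hKsec : ∀ u : X, ι (Ksec u) = fun v => k u v)
    (hrepro : ∀ (u : X) (g : H), ⟪g, Ksec u⟫ = ι g u)
    {N : ℕ} (U : Fin N → X)
    (K : Matrix (Fin N) (Fin N) ℝ) (hK : K = Matrix.of fun i j => k (U i) (U j))
    (mN : H → X → ℝ)
    (hmN : ∀ (g : H) (u : X), mN g u = (fun i => k u (U i)) ⬝ᵥ (K⁻¹ *ᵥ fun i => ι g (U i)))
    (kN : X → ℝ)
    (hkN : ∀ u : X, kN u = k u u - (fun i => k u (U i)) ⬝ᵥ (K⁻¹ *ᵥ fun i => k u (U i)))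
    (u : X) :
    Real.sqrt (kN u) = ⨆ g : {g : H // ‖g‖ = 1}, |ι g.1 u - mN g.1 u| := by
  have hk : ∀ v w, k v w = ⟪Ksec v, Ksec w⟫ := fun v w => by rw [hrepro, hKsec]
  have hK_gram : K = gram ℝ (Ksec ∘ U) := by
    rw [hK]
    ext i j
    simp [gram_apply, hk]
  set h := gramResidual (Ksec ∘ U) (Ksec u)
  have herror : ∀ g, ι g u - mN g u = ⟪g, h⟫ := fun g => by
    simp only [h, inner_gramResidual, hmN, hK_gram, ← hrepro, hk, Function.comp_apply]
  have hvariance : kN u = ‖h‖ ^ 2 := by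
    simp only [h, norm_gramResidual_sq, hkN, hK_gram, hk, Function.comp_apply]
  rw [hvariance, Real.sqrt_sq (norm_nonneg h), ← iSup_abs_inner_sphere h]
  exact iSup_congr fun g => by rw [herror]

/-- For every `u ∈ X`, the square root of the predictive variance equals the
worst-case interpolation error over the unit ball of the RKHS:
`k_N(u,u)^{1/2} = sup_{‖g‖_{H_k}=1} |g(u) − m_N^g(u)|`. -/
theorem predictive_stddev_eq_sup_unit_ball_interpolation_error
    {X : Type*} [Nonempty X] (k : X → X → ℝ)
    (hsym : ∀ u v : X, k u v = k v u)
    (hpd : ∀ (m : ℕ) (v : Fin m → X), Function.Injective v →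
      (Matrix.of fun i j => k (v i) (v j)).PosDef)
    {H : Type*} [NormedAddCommGroup H] [InnerProductSpace ℝ H] [CompleteSpace H]
    (ι : H →ₗ[ℝ] X → ℝ)
    (Ksec : X → H)
    (hKsec : ∀ u : X, ι (Ksec u) = fun v => k u v)
    (hrepro : ∀ (u : X) (g : H), ⟪g, Ksec u⟫ = ι g u)
    {N : ℕ} (U : Fin N → X) (hU : Function.Injective U)
    (K : Matrix (Fin N) (Fin N) ℝ) (hK : K = Matrix.of fun i j => k (U i) (U j))
    (mN : H → X → ℝ)
    (hmN : ∀ (g : H) (u : X), mN g u = (fun i => k u (U i)) ⬝ᵥ (K⁻¹ *ᵥ fun i => ι g (U i)))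
    (kN : X → ℝ)
    (hkN : ∀ u : X, kN u = k u u - (fun i => k u (U i)) ⬝ᵥ (K⁻¹ *ᵥ fun i => k u (U i)))
    (u : X) :
    Real.sqrt (kN u) = ⨆ g : {g : H // ‖g‖ = 1}, |ι g.1 u - mN g.1 u| :=
  predictive_stddev_eq_sup_unit_ball_interpolation_error_general k ι Ksec hKsec hrepro U K hK mN hmN
    kN hkN u
end

section
/- If the kernel matrix K is symmetric positive definite, then for all u, u' ∈ X, (k(u,u) − 2k(u,u') + k(u',u')) − (k_N(u,u) − 2k_N(u,u') + k_N(u',u')) = (k(u,U) − k(u',U))^T K^{-1} (k(u,U) − k(u',U)) ≥ 0; in particular the second-order increments of the predictive covariance are dominated by those of the prior covariance: k_N(u,u) − 2k_N(u,u') + k_N(u',u') ≤ k(u,u) − 2k(u,u') + k(u',u'). -/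
open Matrix

namespace Matrix

variable {n R : Type*} [Fintype n] [CommRing R]

theorem IsSymm.dotProduct_mulVec_comm {M : Matrix n n R} (hM : M.IsSymm) (x y : n → R) :
    x ⬝ᵥ (M *ᵥ y) = y ⬝ᵥ (M *ᵥ x) := by
  nth_rewrite 1 [← hM.eq]
  exact dotProduct_transpose_mulVec M x y

theorem IsSymm.dotProduct_mulVec_sub_sub {M : Matrix n n R} (hM : M.IsSymm) (x y : n → R) :
    (x - y) ⬝ᵥ (M *ᵥ (x - y))
      = x ⬝ᵥ (M *ᵥ x) - 2 * (x ⬝ᵥ (M *ᵥ y)) + y ⬝ᵥ (M *ᵥ y) := by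
  rw [mulVec_sub, sub_dotProduct, dotProduct_sub, dotProduct_sub, hM.dotProduct_mulVec_comm y x]
  ring

end Matrix

theorem predictive_covariance_increments_dominated_general
    {X : Type*} (k : X → X → ℝ)
    {N : ℕ} (U : Fin N → X)
    (K : Matrix (Fin N) (Fin N) ℝ)
    (hKpd : K.PosDef)
    (kN : X → X → ℝ)
    (hkN : ∀ u u' : X,
      kN u u' = k u u' - (fun i => k u (U i)) ⬝ᵥ (K⁻¹ *ᵥ fun i => k u' (U i)))
    (u u' : X) :
    ((k u u - 2 * k u u' + k u' u') - (kN u u - 2 * kN u u' + kN u' u')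
        = ((fun i => k u (U i)) - fun i => k u' (U i)) ⬝ᵥ
            (K⁻¹ *ᵥ ((fun i => k u (U i)) - fun i => k u' (U i))))
      ∧ 0 ≤ ((fun i => k u (U i)) - fun i => k u' (U i)) ⬝ᵥ
            (K⁻¹ *ᵥ ((fun i => k u (U i)) - fun i => k u' (U i)))
      ∧ kN u u - 2 * kN u u' + kN u' u' ≤ k u u - 2 * k u u' + k u' u' := by
  set a : Fin N → ℝ := fun i => k u (U i)
  set b : Fin N → ℝ := fun i => k u' (U i)
  have hKinv_symm : K⁻¹.IsSymm := isHermitian_iff_isSymm.mp hKpd.isHermitian.inv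
  have hincrement : (k u u - 2 * k u u' + k u' u') - (kN u u - 2 * kN u u' + kN u' u')
      = (a - b) ⬝ᵥ (K⁻¹ *ᵥ (a - b)) := by
    rw [hkN u u, hkN u u', hkN u' u', hKinv_symm.dotProduct_mulVec_sub_sub]
    ring
  have hnonneg : 0 ≤ (a - b) ⬝ᵥ (K⁻¹ *ᵥ (a - b)) := by
    simpa only [star_trivial] using hKpd.posSemidef.inv.dotProduct_mulVec_nonneg (a - b)
  exact ⟨hincrement, hnonneg, by linarith⟩

/-- If the kernel matrix `K` is symmetric positive definite, then for all
`u, u' ∈ X`,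
`(k(u,u) − 2k(u,u') + k(u',u')) − (k_N(u,u) − 2k_N(u,u') + k_N(u',u'))
  = (k(u,U) − k(u',U))ᵀ K⁻¹ (k(u,U) − k(u',U)) ≥ 0`;
in particular the second-order increments of the predictive covariance are dominated by
those of the prior covariance. -/
theorem predictive_covariance_increments_dominated
    {X : Type*} (k : X → X → ℝ)
    (hsym : ∀ u v : X, k u v = k v u)
    {N : ℕ} (U : Fin N → X) (hU : Function.Injective U)
    (K : Matrix (Fin N) (Fin N) ℝ) (hK : K = Matrix.of fun i j => k (U i) (U j))
    (hKpd : K.PosDef)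
    (kN : X → X → ℝ)
    (hkN : ∀ u u' : X,
      kN u u' = k u u' - (fun i => k u (U i)) ⬝ᵥ (K⁻¹ *ᵥ fun i => k u' (U i)))
    (u u' : X) :
    ((k u u - 2 * k u u' + k u' u') - (kN u u - 2 * kN u u' + kN u' u')
        = ((fun i => k u (U i)) - fun i => k u' (U i)) ⬝ᵥ
            (K⁻¹ *ᵥ ((fun i => k u (U i)) - fun i => k u' (U i))))
      ∧ 0 ≤ ((fun i => k u (U i)) - fun i => k u' (U i)) ⬝ᵥ
            (K⁻¹ *ᵥ ((fun i => k u (U i)) - fun i => k u' (U i)))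
      ∧ kN u u - 2 * kN u u' + kN u' u' ≤ k u u - 2 * k u u' + k u' u' :=
  predictive_covariance_increments_dominated_general k U K hKpd kN hkN u u'
end

section
/- For every B ≥ 0, ‖y‖, and σ > 0 there exists a constant C, depending only on B, ‖y‖ and σ, such that for all bounded measurable maps G, m : X → ℝ^J with sup_{u ∈ X} ‖G(u)‖ ≤ B and sup_{u ∈ X} ‖m(u)‖ ≤ B, the Hellinger distance between the posterior measures satisfies d_Hell(μ_G, μ_m) ≤ C (∫_X ‖G(u) − m(u)‖² dμ₀(u))^{1/2}. -/
/-!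
The square roots of the unnormalised likelihoods are vectors of `L²(μ₀)` whose squared norms are
the normalising constants, and the Hellinger distance is `1/√2` times the distance between their
normalisations. Normalisation is Lipschitz away from the origin
(`‖x‖ ‖x/‖x‖ - y/‖y‖‖ ≤ 2 ‖x - y‖`), the normalising constants are at least
`exp (-(‖y‖ + B)² / (2σ²))`, and `√likelihood = exp (-‖y - ·‖² / (4σ²))` is Lipschitz on the ball
of radius `‖y‖ + B` around the data.
-/

open MeasureTheory

theorem norm_mul_norm_inv_smul_sub_norm_inv_smul_le {E : Type*} [NormedAddCommGroup E]
    [NormedSpace ℝ E] (x y : E) : ‖x‖ * ‖‖x‖⁻¹ • x - ‖y‖⁻¹ • y‖ ≤ 2 * ‖x - y‖ := by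
  rcases eq_or_ne x 0 with rfl | hx
  · simp
  have hx' : ‖x‖ ≠ 0 := norm_ne_zero_iff.mpr hx
  have hsplit : ‖x‖ • (‖x‖⁻¹ • x - ‖y‖⁻¹ • y) = (x - y) + (1 - ‖x‖ * ‖y‖⁻¹) • y := by
    rw [smul_sub, smul_smul, smul_smul, mul_inv_cancel₀ hx']
    module
  have hcorr : ‖(1 - ‖x‖ * ‖y‖⁻¹) • y‖ ≤ ‖x - y‖ := by
    rcases eq_or_ne y 0 with rfl | hy
    · simp
    have hy' : ‖y‖ ≠ 0 := norm_ne_zero_iff.mpr hy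
    rw [norm_smul, Real.norm_eq_abs, ← abs_norm y, ← abs_mul, abs_norm, sub_mul, one_mul,
      mul_assoc, inv_mul_cancel₀ hy', mul_one, norm_sub_rev x y]
    exact abs_norm_sub_norm_le y x
  calc ‖x‖ * ‖‖x‖⁻¹ • x - ‖y‖⁻¹ • y‖ = ‖(x - y) + (1 - ‖x‖ * ‖y‖⁻¹) • y‖ := by
        rw [← hsplit, norm_smul, norm_norm]
    _ ≤ ‖x - y‖ + ‖x - y‖ := (norm_add_le _ _).trans (by gcongr)
    _ = 2 * ‖x - y‖ := by ring

theorem integral_sq_eq_norm_toLp_sq {X : Type*} [MeasurableSpace X] {μ : Measure X}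
    {f : X → ℝ} (hf : MemLp f 2 μ) : ∫ u, f u ^ 2 ∂μ = ‖hf.toLp f‖ ^ 2 := by
  rw [← real_inner_self_eq_norm_sq, L2.inner_def]
  refine integral_congr_ae ?_
  filter_upwards [hf.coeFn_toLp] with u hu
  simp [hu, sq]

theorem exp_neg_sub_exp_neg_le_abs {a : ℝ} (ha : 0 ≤ a) (b : ℝ) :
    Real.exp (-a) - Real.exp (-b) ≤ |a - b| := by
  rcases le_total a b with hab | hba
  · have hexp : Real.exp (-b) = Real.exp (-a) * Real.exp (a - b) := by
      rw [← Real.exp_add]; ring_nf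
    have hle_one : Real.exp (-a) ≤ 1 := Real.exp_le_one_iff.mpr (by linarith)
    rw [abs_of_nonpos (by linarith)]
    nlinarith [Real.add_one_le_exp (a - b), Real.exp_pos (-a)]
  · have : Real.exp (-a) ≤ Real.exp (-b) := Real.exp_le_exp.mpr (by linarith)
    linarith [abs_nonneg (a - b)]

theorem abs_exp_neg_sub_exp_neg_le {a b : ℝ} (ha : 0 ≤ a) (hb : 0 ≤ b) :
    |Real.exp (-a) - Real.exp (-b)| ≤ |a - b| :=
  abs_sub_le_iff.mpr
    ⟨exp_neg_sub_exp_neg_le_abs ha b, abs_sub_comm a b ▸ exp_neg_sub_exp_neg_le_abs hb a⟩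

theorem abs_norm_sq_sub_norm_sq_le {E : Type*} [SeminormedAddCommGroup E] (a b : E) :
    |‖a‖ ^ 2 - ‖b‖ ^ 2| ≤ (‖a‖ + ‖b‖) * ‖a - b‖ := by
  rw [sq_sub_sq, abs_mul, abs_of_nonneg (by positivity)]
  gcongr
  exact abs_norm_sub_norm_le a b

section Hellinger

variable {X : Type*} [MeasurableSpace X] {μ : Measure X}

theorem sqrt_integral_mul_sqrt_half_integral_sq_sub_le {p q : X → ℝ} (hp : 0 ≤ p) (hq : 0 ≤ q)
    (hp₂ : MemLp (fun u => √(p u)) 2 μ) (hq₂ : MemLp (fun u => √(q u)) 2 μ) :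
    √(∫ v, p v ∂μ) * √((1 / 2) * ∫ u, (√(p u / ∫ v, p v ∂μ) - √(q u / ∫ v, q v ∂μ)) ^ 2 ∂μ) ≤
      √2 * √(∫ u, (√(p u) - √(q u)) ^ 2 ∂μ) := by
  set Φ := hp₂.toLp
  set Ψ := hq₂.toLp
  have norm_toLp : ∀ {r : X → ℝ}, 0 ≤ r → (hr : MemLp (fun u => √(r u)) 2 μ) →
      ‖hr.toLp‖ = √(∫ v, r v ∂μ) := by
    intro r hr hr₂
    rw [← Real.sqrt_sq (norm_nonneg _), ← integral_sq_eq_norm_toLp_sq]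
    simp_rw [Real.sq_sqrt (hr _)]
  have hnormalized : ∫ u, (√(p u / ∫ v, p v ∂μ) - √(q u / ∫ v, q v ∂μ)) ^ 2 ∂μ =
      ‖‖Φ‖⁻¹ • Φ - ‖Ψ‖⁻¹ • Ψ‖ ^ 2 := by
    have h := (hp₂.const_smul ‖Φ‖⁻¹).sub (hq₂.const_smul ‖Ψ‖⁻¹)
    rw [← MemLp.toLp_const_smul, ← MemLp.toLp_const_smul, ← MemLp.toLp_sub,
      ← integral_sq_eq_norm_toLp_sq h, norm_toLp hp, norm_toLp hq]
    simp only [div_eq_inv_mul, Real.sqrt_mul (inv_nonneg.mpr (integral_nonneg hp)),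
      Real.sqrt_mul (inv_nonneg.mpr (integral_nonneg hq)), Real.sqrt_inv, Pi.sub_apply,
      Pi.smul_apply, smul_eq_mul]
  have hdiff : ∫ u, (√(p u) - √(q u)) ^ 2 ∂μ = ‖Φ - Ψ‖ ^ 2 := by
    rw [← MemLp.toLp_sub, ← integral_sq_eq_norm_toLp_sq]
    rfl
  rw [hnormalized, hdiff, ← norm_toLp hp hp₂, Real.sqrt_sq (norm_nonneg _),
    Real.sqrt_mul (by norm_num), Real.sqrt_sq (norm_nonneg _)]
  have hconst : √(1 / 2) * 2 = √2 := by
    rw [← Real.sqrt_sq zero_le_two, ← Real.sqrt_mul (by norm_num)]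
    norm_num
  calc ‖Φ‖ * (√(1 / 2) * ‖‖Φ‖⁻¹ • Φ - ‖Ψ‖⁻¹ • Ψ‖)
      = √(1 / 2) * (‖Φ‖ * ‖‖Φ‖⁻¹ • Φ - ‖Ψ‖⁻¹ • Ψ‖) := by ring
    _ ≤ √(1 / 2) * (2 * ‖Φ - Ψ‖) :=
      mul_le_mul_of_nonneg_left (norm_mul_norm_inv_smul_sub_norm_inv_smul_le Φ Ψ)
        (Real.sqrt_nonneg _)
    _ = √2 * ‖Φ - Ψ‖ := by rw [← hconst]; ring

end Hellinger

section GaussianLikelihood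

variable {E : Type*} [NormedAddCommGroup E]

noncomputable def gaussianLikelihood (y : E) (σ : ℝ) (v : E) : ℝ :=
  Real.exp (-‖y - v‖ ^ 2 / (2 * σ ^ 2))

variable {y : E} {σ R : ℝ}

theorem gaussianLikelihood_pos (v : E) : 0 < gaussianLikelihood y σ v :=
  Real.exp_pos _

theorem gaussianLikelihood_le_one (v : E) : gaussianLikelihood y σ v ≤ 1 :=
  Real.exp_le_one_iff.mpr (div_nonpos_of_nonpos_of_nonneg (by simp) (by positivity))

theorem exp_neg_sq_div_le_gaussianLikelihood {v : E} (hv : ‖y - v‖ ≤ R) :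
    Real.exp (-R ^ 2 / (2 * σ ^ 2)) ≤ gaussianLikelihood y σ v := by
  unfold gaussianLikelihood
  gcongr

theorem abs_sqrt_gaussianLikelihood_sub_le {g h : E} (hg : ‖y - g‖ ≤ R) (hh : ‖y - h‖ ≤ R) :
    |√(gaussianLikelihood y σ g) - √(gaussianLikelihood y σ h)| ≤ R / (2 * σ ^ 2) * ‖g - h‖ := by
  simp only [gaussianLikelihood, ← Real.exp_half, div_div, neg_div]
  refine (abs_exp_neg_sub_exp_neg_le (by positivity) (by positivity)).trans ?_
  have hsq : |‖y - g‖ ^ 2 - ‖y - h‖ ^ 2| ≤ 2 * R * ‖g - h‖ := by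
    refine (abs_norm_sq_sub_norm_sq_le _ _).trans ?_
    rw [sub_sub_sub_cancel_left, norm_sub_rev h g]
    exact mul_le_mul_of_nonneg_right (by linarith) (norm_nonneg (g - h))
  rw [← sub_div, abs_div, abs_of_nonneg (by positivity : (0 : ℝ) ≤ 2 * σ ^ 2 * 2)]
  calc |‖y - g‖ ^ 2 - ‖y - h‖ ^ 2| / (2 * σ ^ 2 * 2) ≤ 2 * R * ‖g - h‖ / (2 * σ ^ 2 * 2) := by
        gcongr
    _ = R / (2 * σ ^ 2) * ‖g - h‖ := by ring

variable {X : Type*} [MeasurableSpace X] {μ : Measure X}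

theorem integral_sq_sqrt_gaussianLikelihood_sub_le {F₁ F₂ : X → E} (h₁ : ∀ u, ‖y - F₁ u‖ ≤ R)
    (h₂ : ∀ u, ‖y - F₂ u‖ ≤ R) (hint : Integrable (fun u => ‖F₁ u - F₂ u‖ ^ 2) μ) :
    ∫ u, (√(gaussianLikelihood y σ (F₁ u)) - √(gaussianLikelihood y σ (F₂ u))) ^ 2 ∂μ ≤
      (R / (2 * σ ^ 2)) ^ 2 * ∫ u, ‖F₁ u - F₂ u‖ ^ 2 ∂μ := by
  rw [← integral_const_mul]
  refine integral_mono_of_nonneg (ae_of_all _ fun u => sq_nonneg _) (hint.const_mul _)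
    (ae_of_all _ fun u => ?_)
  beta_reduce
  rw [← mul_pow, ← sq_abs]
  exact pow_le_pow_left₀ (abs_nonneg _) (abs_sqrt_gaussianLikelihood_sub_le (h₁ u) (h₂ u)) 2

variable [MeasurableSpace E] [MeasurableSub E] [OpensMeasurableSpace E] {F : X → E}

theorem Measurable.gaussianLikelihood (hF : Measurable F) :
    Measurable fun u => gaussianLikelihood y σ (F u) :=
  (((hF.const_sub y).norm.pow_const 2).neg.div_const _).exp

theorem memLp_sqrt_gaussianLikelihood [IsFiniteMeasure μ] (hF : Measurable F) :
    MemLp (fun u => √(gaussianLikelihood y σ (F u))) 2 μ := by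
  refine .of_bound hF.gaussianLikelihood.sqrt.aestronglyMeasurable 1 (ae_of_all _ fun u => ?_)
  rw [Real.norm_of_nonneg (Real.sqrt_nonneg _), Real.sqrt_le_one]
  exact gaussianLikelihood_le_one _

theorem exp_neg_sq_div_le_integral_gaussianLikelihood [IsProbabilityMeasure μ]
    (hF : Measurable F) (hR : ∀ u, ‖y - F u‖ ≤ R) :
    Real.exp (-R ^ 2 / (2 * σ ^ 2)) ≤ ∫ u, gaussianLikelihood y σ (F u) ∂μ := by
  have hint : Integrable (fun u => gaussianLikelihood y σ (F u)) μ :=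
    .of_bound hF.gaussianLikelihood.aestronglyMeasurable 1 (ae_of_all _ fun u => by
      rw [Real.norm_of_nonneg (gaussianLikelihood_pos _).le]; exact gaussianLikelihood_le_one _)
  calc Real.exp (-R ^ 2 / (2 * σ ^ 2)) = ∫ _, Real.exp (-R ^ 2 / (2 * σ ^ 2)) ∂μ := by simp
    _ ≤ _ := integral_mono (integrable_const _) hint
        fun u => exp_neg_sq_div_le_gaussianLikelihood (hR u)

end GaussianLikelihood

theorem hellinger_bound_mean_approx_vector_general
    {X : Type*} [MeasurableSpace X] (μ₀ : Measure X) [IsProbabilityMeasure μ₀]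
    (J : ℕ) (y : EuclideanSpace ℝ (Fin J)) (σ : ℝ) (B : ℝ) (hB : 0 ≤ B) :
    ∃ C : ℝ, ∀ G m : X → EuclideanSpace ℝ (Fin J),
      Measurable G → Measurable m →
      (∀ u : X, ‖G u‖ ≤ B) → (∀ u : X, ‖m u‖ ≤ B) →
      Real.sqrt ((1 / 2) * ∫ u,
          (Real.sqrt (Real.exp (-‖y - G u‖ ^ 2 / (2 * σ ^ 2)) /
              ∫ v, Real.exp (-‖y - G v‖ ^ 2 / (2 * σ ^ 2)) ∂μ₀) -
            Real.sqrt (Real.exp (-‖y - m u‖ ^ 2 / (2 * σ ^ 2)) /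
              ∫ v, Real.exp (-‖y - m v‖ ^ 2 / (2 * σ ^ 2)) ∂μ₀)) ^ 2 ∂μ₀)
        ≤ C * Real.sqrt (∫ u, ‖G u - m u‖ ^ 2 ∂μ₀) := by
  set R := ‖y‖ + B
  set K := R / (2 * σ ^ 2)
  set c := Real.exp (-R ^ 2 / (2 * σ ^ 2))
  refine ⟨√2 * K / √c, fun G m hG hm hGB hmB => ?_⟩
  have hGR (u : X) : ‖y - G u‖ ≤ R := norm_sub_le_of_le le_rfl (hGB u)
  have hmR (u : X) : ‖y - m u‖ ≤ R := norm_sub_le_of_le le_rfl (hmB u)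
  have hint : Integrable (fun u => ‖G u - m u‖ ^ 2) μ₀ :=
    .of_bound (by fun_prop) ((B + B) ^ 2) (ae_of_all _ fun u => by
      rw [Real.norm_of_nonneg (sq_nonneg _)]
      exact pow_le_pow_left₀ (norm_nonneg _) (norm_sub_le_of_le (hGB u) (hmB u)) 2)
  have hZ : √c ≤ √(∫ u, gaussianLikelihood y σ (G u) ∂μ₀) :=
    Real.sqrt_le_sqrt (exp_neg_sq_div_le_integral_gaussianLikelihood hG hGR)
  have hdist : √(∫ u, (√(gaussianLikelihood y σ (G u)) - √(gaussianLikelihood y σ (m u))) ^ 2 ∂μ₀)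
      ≤ K * √(∫ u, ‖G u - m u‖ ^ 2 ∂μ₀) := by
    rw [← Real.sqrt_sq (by positivity : 0 ≤ K), ← Real.sqrt_mul (sq_nonneg K)]
    exact Real.sqrt_le_sqrt (integral_sq_sqrt_gaussianLikelihood_sub_le hGR hmR hint)
  have hell := sqrt_integral_mul_sqrt_half_integral_sq_sub_le (μ := μ₀)
    (p := fun u => gaussianLikelihood y σ (G u)) (q := fun u => gaussianLikelihood y σ (m u))
    (fun u => (gaussianLikelihood_pos _).le) (fun u => (gaussianLikelihood_pos _).le)
    (memLp_sqrt_gaussianLikelihood hG) (memLp_sqrt_gaussianLikelihood hm)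
  have hc : 0 < √c := Real.sqrt_pos.mpr (Real.exp_pos _)
  calc _ ≤ √2 * √(∫ u, (√(gaussianLikelihood y σ (G u)) -
          √(gaussianLikelihood y σ (m u))) ^ 2 ∂μ₀) / √(∫ u, gaussianLikelihood y σ (G u) ∂μ₀) :=
        (le_div_iff₀' (hc.trans_le hZ)).mpr hell
    _ ≤ √2 * (K * √(∫ u, ‖G u - m u‖ ^ 2 ∂μ₀)) / √c := by gcongr
    _ = √2 * K / √c * √(∫ u, ‖G u - m u‖ ^ 2 ∂μ₀) := by ring

/-- For every `B ≥ 0`, `‖y‖` and `σ > 0` there is a constant `C` such that for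
all bounded measurable `G, m : X → ℝ^J` with `sup ‖G‖ ≤ B` and `sup ‖m‖ ≤ B`, the Hellinger
distance between the corresponding posteriors satisfies
`d_Hell(μ_G, μ_m) ≤ C (∫_X ‖G(u) − m(u)‖² dμ₀(u))^{1/2}`.
The Hellinger distance is expressed via the densities
`dμ_F/dμ₀ = exp(−‖y − F(u)‖²/(2σ²))/Z_F`. -/
theorem hellinger_bound_mean_approx_vector
    {X : Type*} [MeasurableSpace X] (μ₀ : Measure X) [IsProbabilityMeasure μ₀]
    (J : ℕ) (y : EuclideanSpace ℝ (Fin J)) (σ : ℝ) (hσ : 0 < σ) (B : ℝ) (hB : 0 ≤ B) :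
    ∃ C : ℝ, ∀ G m : X → EuclideanSpace ℝ (Fin J),
      Measurable G → Measurable m →
      (∀ u : X, ‖G u‖ ≤ B) → (∀ u : X, ‖m u‖ ≤ B) →
      Real.sqrt ((1 / 2) * ∫ u,
          (Real.sqrt (Real.exp (-‖y - G u‖ ^ 2 / (2 * σ ^ 2)) /
              ∫ v, Real.exp (-‖y - G v‖ ^ 2 / (2 * σ ^ 2)) ∂μ₀) -
            Real.sqrt (Real.exp (-‖y - m u‖ ^ 2 / (2 * σ ^ 2)) /
              ∫ v, Real.exp (-‖y - m v‖ ^ 2 / (2 * σ ^ 2)) ∂μ₀)) ^ 2 ∂μ₀)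
        ≤ C * Real.sqrt (∫ u, ‖G u - m u‖ ^ 2 ∂μ₀) :=
  hellinger_bound_mean_approx_vector_general μ₀ J y σ B hB
end

section
/- For every B ≥ 0 there exists a constant C, depending only on B, such that for all bounded measurable functions Φ, Ψ : X → ℝ with sup_{u ∈ X} |Φ(u)| ≤ B and sup_{u ∈ X} |Ψ(u)| ≤ B, the Hellinger distance between the associated Gibbs measures satisfies d_Hell(μ_Φ, μ_Ψ) ≤ C (∫_X |Φ(u) − Ψ(u)|² dμ₀(u))^{1/2}. -/
/-!
Writing the square-root Gibbs density as `exp (-(Φ + log Z_Φ) / 2)` and using that `exp` is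
`exp B`-Lipschitz below `B`, the difference of root densities is pointwise at most
`exp B / 2 * |Φ - Ψ + (log Z_Φ - log Z_Ψ)|`. The normalising constants are bounded below by
`exp (-B)`, so `log` is `exp B`-Lipschitz on them and `|log Z_Φ - log Z_Ψ| ≤ exp (2B) ∫ |Φ - Ψ|`,
which Cauchy–Schwarz bounds by the `L²` distance of `Φ` and `Ψ`.
-/

open MeasureTheory Real

namespace Real

lemma abs_exp_sub_exp_le_of_le {x y M : ℝ} (hx : x ≤ M) (hy : y ≤ M) :
    |exp x - exp y| ≤ exp M * |x - y| := by
  wlog hyx : y ≤ x generalizing x y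
  · rw [abs_sub_comm, abs_sub_comm x y]
    exact this hy hx (le_of_not_ge hyx)
  have hgap : exp x - exp y ≤ exp x * (x - y) := by
    have h := one_sub_le_exp_neg (x - y)
    rw [exp_neg, exp_sub] at h
    rw [inv_div, le_div_iff₀ (exp_pos x)] at h
    nlinarith [exp_pos x]
  rw [abs_of_nonneg (sub_nonneg.2 (exp_le_exp.2 hyx)), abs_of_nonneg (sub_nonneg.2 hyx)]
  exact hgap.trans (mul_le_mul_of_nonneg_right (exp_le_exp.2 hx) (sub_nonneg.2 hyx))

lemma abs_log_sub_log_le_of_le {x y m : ℝ} (hm : 0 < m) (hx : m ≤ x) (hy : m ≤ y) :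
    |log x - log y| ≤ |x - y| / m := by
  wlog hyx : y ≤ x generalizing x y
  · rw [abs_sub_comm, abs_sub_comm x y]
    exact this hy hx (le_of_not_ge hyx)
  have hy0 : 0 < y := hm.trans_le hy
  have hlog : log x - log y ≤ (x - y) / y := by
    rw [← log_div (hy0.trans_le hyx).ne' hy0.ne', sub_div, div_self hy0.ne']
    exact log_le_sub_one_of_pos (div_pos (hy0.trans_le hyx) hy0)
  rw [abs_of_nonneg (sub_nonneg.2 (log_le_log hy0 hyx)), abs_of_nonneg (sub_nonneg.2 hyx)]
  exact hlog.trans (div_le_div_of_nonneg_left (sub_nonneg.2 hyx) hm hy)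

lemma sqrt_exp_div {Z : ℝ} (a : ℝ) (hZ : 0 < Z) : √(exp a / Z) = exp ((a - log Z) / 2) := by
  rw [← exp_log hZ, ← exp_sub, log_exp, sqrt_eq_iff_mul_self_eq_of_pos (exp_pos _), ← exp_add]
  ring_nf

lemma abs_sqrt_exp_neg_div_sub_le {B φ ψ Zφ Zψ : ℝ} (hφ : -B ≤ φ) (hψ : -B ≤ ψ)
    (hZφ : exp (-B) ≤ Zφ) (hZψ : exp (-B) ≤ Zψ) :
    |√(exp (-φ) / Zφ) - √(exp (-ψ) / Zψ)| ≤ exp B / 2 * |φ - ψ + (log Zφ - log Zψ)| := by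
  have hlog (Z : ℝ) (hZ : exp (-B) ≤ Z) : -B ≤ log Z := by
    simpa using log_le_log (exp_pos _) hZ
  rw [sqrt_exp_div _ ((exp_pos _).trans_le hZφ), sqrt_exp_div _ ((exp_pos _).trans_le hZψ)]
  refine (abs_exp_sub_exp_le_of_le (M := B) ?_ ?_).trans_eq ?_
  · linarith [hlog Zφ hZφ]
  · linarith [hlog Zψ hZψ]
  · rw [show (-φ - log Zφ) / 2 - (-ψ - log Zψ) / 2 = -(φ - ψ + (log Zφ - log Zψ)) / 2 by ring,
      abs_div, abs_neg, abs_two]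
    ring

end Real

section

variable {X : Type*} [MeasurableSpace X] {μ : Measure X}

lemma sq_integral_le_integral_sq [IsProbabilityMeasure μ] {f : X → ℝ} (hf : MemLp f 2 μ) :
    (∫ u, f u ∂μ) ^ 2 ≤ ∫ u, f u ^ 2 ∂μ := by
  have hvar := ProbabilityTheory.variance_nonneg f μ
  rw [ProbabilityTheory.variance_eq_sub hf] at hvar
  simpa using hvar

variable {B : ℝ} {Φ Ψ : X → ℝ}

lemma memLp_sub_of_abs_le [IsFiniteMeasure μ] (p : ENNReal) (hΦ : Measurable Φ)
    (hΨ : Measurable Ψ) (hΦB : ∀ u, |Φ u| ≤ B) (hΨB : ∀ u, |Ψ u| ≤ B) :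
    MemLp (fun u => Φ u - Ψ u) p μ :=
  MemLp.of_bound (hΦ.sub hΨ).aestronglyMeasurable (2 * B) <| ae_of_all _ fun u => by
    rw [norm_eq_abs]
    linarith [abs_sub (Φ u) (Ψ u), hΦB u, hΨB u]

lemma integrable_exp_neg [IsFiniteMeasure μ] (hΦ : Measurable Φ) (hΦB : ∀ u, |Φ u| ≤ B) :
    Integrable (fun u => exp (-Φ u)) μ :=
  Integrable.of_bound hΦ.neg.exp.aestronglyMeasurable (exp B) <| ae_of_all _ fun u => by
    rw [norm_of_nonneg (exp_pos _).le]
    exact exp_le_exp.2 (by linarith [(abs_le.1 (hΦB u)).1])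

lemma exp_neg_le_integral_exp_neg [IsProbabilityMeasure μ] (hΦ : Measurable Φ)
    (hΦB : ∀ u, |Φ u| ≤ B) : exp (-B) ≤ ∫ u, exp (-Φ u) ∂μ := by
  calc exp (-B) = ∫ _u, exp (-B) ∂μ := by simp
    _ ≤ ∫ u, exp (-Φ u) ∂μ := integral_mono (integrable_const _) (integrable_exp_neg hΦ hΦB)
        fun u => exp_le_exp.2 (by linarith [(abs_le.1 (hΦB u)).2])

lemma abs_integral_exp_neg_sub_le [IsFiniteMeasure μ] (hΦ : Measurable Φ) (hΨ : Measurable Ψ)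
    (hΦB : ∀ u, |Φ u| ≤ B) (hΨB : ∀ u, |Ψ u| ≤ B) :
    |∫ u, exp (-Φ u) ∂μ - ∫ u, exp (-Ψ u) ∂μ| ≤ exp B * ∫ u, |Φ u - Ψ u| ∂μ := by
  have hdiff : Integrable (fun u => |Φ u - Ψ u|) μ :=
    ((memLp_sub_of_abs_le 1 hΦ hΨ hΦB hΨB).integrable le_rfl).abs
  have hpoint (u : X) : |exp (-Φ u) - exp (-Ψ u)| ≤ exp B * |Φ u - Ψ u| := by
    have h := abs_exp_sub_exp_le_of_le (M := B) (x := -Φ u) (y := -Ψ u)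
      (by linarith [(abs_le.1 (hΦB u)).1]) (by linarith [(abs_le.1 (hΨB u)).1])
    rwa [neg_sub_neg, abs_sub_comm (Ψ u)] at h
  rw [← integral_sub (integrable_exp_neg hΦ hΦB) (integrable_exp_neg hΨ hΨB),
    ← integral_const_mul]
  exact abs_integral_le_integral_abs.trans
    (integral_mono_of_nonneg (ae_of_all _ fun _ => abs_nonneg _) (hdiff.const_mul _)
      (ae_of_all _ hpoint))

lemma sq_log_integral_exp_neg_sub_le [IsProbabilityMeasure μ] (hΦ : Measurable Φ)
    (hΨ : Measurable Ψ) (hΦB : ∀ u, |Φ u| ≤ B) (hΨB : ∀ u, |Ψ u| ≤ B) :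
    (log (∫ u, exp (-Φ u) ∂μ) - log (∫ u, exp (-Ψ u) ∂μ)) ^ 2
      ≤ exp (4 * B) * ∫ u, (Φ u - Ψ u) ^ 2 ∂μ := by
  have hCS := sq_integral_le_integral_sq (memLp_sub_of_abs_le (μ := μ) 2 hΦ hΨ hΦB hΨB).norm
  simp only [norm_eq_abs, sq_abs] at hCS
  have hlog := abs_log_sub_log_le_of_le (exp_pos (-B)) (exp_neg_le_integral_exp_neg (μ := μ) hΦ hΦB)
    (exp_neg_le_integral_exp_neg (μ := μ) hΨ hΨB)
  have hZ := abs_integral_exp_neg_sub_le (μ := μ) hΦ hΨ hΦB hΨB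
  rw [div_eq_mul_inv, ← exp_neg, neg_neg] at hlog
  have hchain := hlog.trans (mul_le_mul_of_nonneg_right hZ (exp_pos B).le)
  calc _ = |log (∫ u, exp (-Φ u) ∂μ) - log (∫ u, exp (-Ψ u) ∂μ)| ^ 2 := (sq_abs _).symm
    _ ≤ ((exp B * ∫ u, |Φ u - Ψ u| ∂μ) * exp B) ^ 2 := pow_le_pow_left₀ (abs_nonneg _) hchain 2
    _ = exp (4 * B) * (∫ u, |Φ u - Ψ u| ∂μ) ^ 2 := by
        rw [show 4 * B = B + B + B + B by ring, exp_add, exp_add, exp_add]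
        ring
    _ ≤ exp (4 * B) * ∫ u, (Φ u - Ψ u) ^ 2 ∂μ := mul_le_mul_of_nonneg_left hCS (exp_pos _).le

lemma integral_sq_sqrt_exp_neg_div_sub_le [IsProbabilityMeasure μ] (hΦ : Measurable Φ)
    (hΨ : Measurable Ψ) (hΦB : ∀ u, |Φ u| ≤ B) (hΨB : ∀ u, |Ψ u| ≤ B) :
    ∫ u, (√(exp (-Φ u) / ∫ v, exp (-Φ v) ∂μ) - √(exp (-Ψ u) / ∫ v, exp (-Ψ v) ∂μ)) ^ 2 ∂μ
      ≤ (exp B / 2) ^ 2 * (2 * ∫ u, (Φ u - Ψ u) ^ 2 ∂μ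
        + 2 * (log (∫ v, exp (-Φ v) ∂μ) - log (∫ v, exp (-Ψ v) ∂μ)) ^ 2) := by
  set c := log (∫ v, exp (-Φ v) ∂μ) - log (∫ v, exp (-Ψ v) ∂μ)
  have hL2 : Integrable (fun u => (Φ u - Ψ u) ^ 2) μ :=
    (memLp_sub_of_abs_le 2 hΦ hΨ hΦB hΨB).integrable_sq
  have hpoint (u : X) :
      (√(exp (-Φ u) / ∫ v, exp (-Φ v) ∂μ) - √(exp (-Ψ u) / ∫ v, exp (-Ψ v) ∂μ)) ^ 2
        ≤ (exp B / 2) ^ 2 * (2 * (Φ u - Ψ u) ^ 2 + 2 * c ^ 2) := by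
    have h := abs_sqrt_exp_neg_div_sub_le (neg_le_of_abs_le (hΦB u)) (neg_le_of_abs_le (hΨB u))
      (exp_neg_le_integral_exp_neg (μ := μ) hΦ hΦB) (exp_neg_le_integral_exp_neg (μ := μ) hΨ hΨB)
    rw [← sq_abs]
    calc _ ≤ (exp B / 2 * |Φ u - Ψ u + c|) ^ 2 := pow_le_pow_left₀ (abs_nonneg _) h 2
      _ ≤ _ := by
        rw [mul_pow, sq_abs]
        gcongr
        nlinarith [sq_nonneg (Φ u - Ψ u - c)]
  calc _ ≤ ∫ u, (exp B / 2) ^ 2 * (2 * (Φ u - Ψ u) ^ 2 + 2 * c ^ 2) ∂μ :=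
        integral_mono_of_nonneg (ae_of_all _ fun _ => sq_nonneg _)
          (((hL2.const_mul 2).add (integrable_const _)).const_mul _) (ae_of_all _ hpoint)
    _ = _ := by
        rw [integral_const_mul, integral_add (hL2.const_mul 2) (integrable_const _),
          integral_const_mul, integral_const, probReal_univ, one_smul]

end

theorem hellinger_bound_mean_approx_scalar_general
    {X : Type*} [MeasurableSpace X] (μ₀ : Measure X) [IsProbabilityMeasure μ₀]
    (B : ℝ) :
    ∃ C : ℝ, ∀ Φ Ψ : X → ℝ,
      Measurable Φ → Measurable Ψ →
      (∀ u : X, |Φ u| ≤ B) → (∀ u : X, |Ψ u| ≤ B) →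
      Real.sqrt ((1 / 2) * ∫ u,
          (Real.sqrt (Real.exp (-Φ u) / ∫ v, Real.exp (-Φ v) ∂μ₀) -
            Real.sqrt (Real.exp (-Ψ u) / ∫ v, Real.exp (-Ψ v) ∂μ₀)) ^ 2 ∂μ₀)
        ≤ C * Real.sqrt (∫ u, |Φ u - Ψ u| ^ 2 ∂μ₀) := by
  refine ⟨exp B / 2 * √(1 + exp (4 * B)), fun Φ Ψ hΦ hΨ hΦB hΨB => ?_⟩
  have hroot := integral_sq_sqrt_exp_neg_div_sub_le (μ := μ₀) hΦ hΨ hΦB hΨB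
  have hlog := sq_log_integral_exp_neg_sub_le (μ := μ₀) hΦ hΨ hΦB hΨB
  have hd : 0 ≤ ∫ u, (Φ u - Ψ u) ^ 2 ∂μ₀ := integral_nonneg fun u => sq_nonneg _
  simp only [sq_abs]
  rw [← sqrt_sq (by positivity : 0 ≤ exp B / 2), ← sqrt_mul (sq_nonneg _),
    ← sqrt_mul (by positivity)]
  apply sqrt_le_sqrt
  nlinarith

/-- For every `B ≥ 0` there is a constant `C` such that for all bounded
measurable `Φ, Ψ : X → ℝ` with `sup |Φ| ≤ B` and `sup |Ψ| ≤ B`, the Hellinger distance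
between the associated Gibbs measures satisfies
`d_Hell(μ_Φ, μ_Ψ) ≤ C (∫_X |Φ(u) − Ψ(u)|² dμ₀(u))^{1/2}`.
The Hellinger distance is expressed via the densities `dμ_Ψ/dμ₀ = exp(−Ψ(u))/Z_Ψ`. -/
theorem hellinger_bound_mean_approx_scalar
    {X : Type*} [MeasurableSpace X] (μ₀ : Measure X) [IsProbabilityMeasure μ₀]
    (B : ℝ) (hB : 0 ≤ B) :
    ∃ C : ℝ, ∀ Φ Ψ : X → ℝ,
      Measurable Φ → Measurable Ψ →
      (∀ u : X, |Φ u| ≤ B) → (∀ u : X, |Ψ u| ≤ B) →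
      Real.sqrt ((1 / 2) * ∫ u,
          (Real.sqrt (Real.exp (-Φ u) / ∫ v, Real.exp (-Φ v) ∂μ₀) -
            Real.sqrt (Real.exp (-Ψ u) / ∫ v, Real.exp (-Ψ v) ∂μ₀)) ^ 2 ∂μ₀)
        ≤ C * Real.sqrt (∫ u, |Φ u - Ψ u| ^ 2 ∂μ₀) :=
  hellinger_bound_mean_approx_scalar_general μ₀ B
end

section
/- Let h₁, h₂ : X → [0,∞) be measurable functions with 0 < Z_i = ∫_X h_i dμ₀ < ∞ for i = 1,2, and let μ_i be the probability measures with densities dμ_i/dμ₀ = h_i/Z_i. Then 2 d_Hell(μ₁, μ₂)² ≤ (2/Z₁) ∫_X ( √(h₁(u)) − √(h₂(u)) )² dμ₀(u) + 2 Z₂ ( Z₁^{−1/2} − Z₂^{−1/2} )². -/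
open MeasureTheory

/-! Writing `√(h/Z) = √h / √Z`, the difference of the normalised square roots splits as
`(√h₁ - √h₂)/√Z₁ + √h₂ (Z₁^{-1/2} - Z₂^{-1/2})`; the inequality `(x + y)² ≤ 2x² + 2y²` applied
pointwise and integrated gives the bound, the second term integrating to `Z₂ (Z₁^{-1/2} - Z₂^{-1/2})²`. -/

namespace Real

theorem sq_sqrt_sub_sqrt_le_abs_add_abs (a b : ℝ) : (√a - √b) ^ 2 ≤ |a| + |b| := by
  have hsq : (√a - √b) ^ 2 ≤ √a ^ 2 + √b ^ 2 := by
    nlinarith [mul_nonneg (sqrt_nonneg a) (sqrt_nonneg b)]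
  rw [sq_sqrt', sq_sqrt'] at hsq
  exact hsq.trans (add_le_add (max_le (le_abs_self a) (abs_nonneg a))
    (max_le (le_abs_self b) (abs_nonneg b)))

theorem sq_sqrt_div_sub_sqrt_div_le {a b y₁ y₂ : ℝ} (hb : 0 ≤ b) (hy₁ : 0 ≤ y₁) :
    (√(a / y₁) - √(b / y₂)) ^ 2
      ≤ 2 / y₁ * (√a - √b) ^ 2 + 2 * ((√y₁)⁻¹ - (√y₂)⁻¹) ^ 2 * b := by
  have hsplit : √(a / y₁) - √(b / y₂)
      = (√a - √b) / √y₁ + √b * ((√y₁)⁻¹ - (√y₂)⁻¹) := by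
    rw [sqrt_div' a hy₁, sqrt_div hb y₂]
    ring
  calc (√(a / y₁) - √(b / y₂)) ^ 2
      ≤ 2 * (((√a - √b) / √y₁) ^ 2 + (√b * ((√y₁)⁻¹ - (√y₂)⁻¹)) ^ 2) := hsplit ▸ add_sq_le
    _ = 2 / y₁ * (√a - √b) ^ 2 + 2 * ((√y₁)⁻¹ - (√y₂)⁻¹) ^ 2 * b := by
      rw [div_pow, mul_pow, sq_sqrt hy₁, sq_sqrt hb]
      ring

end Real

theorem MeasureTheory.Integrable.sq_sqrt_sub_sqrt {X : Type*} [MeasurableSpace X]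
    {μ : Measure X} {f g : X → ℝ} (hf : Integrable f μ) (hg : Integrable g μ) :
    Integrable (fun x => (√(f x) - √(g x)) ^ 2) μ := by
  refine (hf.norm.add hg.norm).mono' ?_ (Filter.Eventually.of_forall fun x => ?_)
  · exact ((Real.continuous_sqrt.comp_aestronglyMeasurable hf.1).sub
      (Real.continuous_sqrt.comp_aestronglyMeasurable hg.1)).pow 2
  · rw [Real.norm_of_nonneg (sq_nonneg _)]
    exact Real.sq_sqrt_sub_sqrt_le_abs_add_abs (f x) (g x)

theorem hellinger_splitting_bound_general
    {X : Type*} [MeasurableSpace X] (μ₀ : Measure X)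
    (h₁ h₂ : X → ℝ)
    (hpos₂ : ∀ u : X, 0 ≤ h₂ u)
    (hint₁ : Integrable h₁ μ₀) (hint₂ : Integrable h₂ μ₀)
    (Z₁ Z₂ : ℝ) (hZ₂ : Z₂ = ∫ u, h₂ u ∂μ₀)
    (hZ₁pos : 0 < Z₁) :
    (∫ u, (Real.sqrt (h₁ u / Z₁) - Real.sqrt (h₂ u / Z₂)) ^ 2 ∂μ₀)
      ≤ (2 / Z₁) * (∫ u, (Real.sqrt (h₁ u) - Real.sqrt (h₂ u)) ^ 2 ∂μ₀)
        + 2 * Z₂ * ((Real.sqrt Z₁)⁻¹ - (Real.sqrt Z₂)⁻¹) ^ 2 := by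
  set c := 2 * ((Real.sqrt Z₁)⁻¹ - (Real.sqrt Z₂)⁻¹) ^ 2
  have hsq := (hint₁.sq_sqrt_sub_sqrt hint₂).const_mul (2 / Z₁)
  have hlin := hint₂.const_mul c
  calc (∫ u, (Real.sqrt (h₁ u / Z₁) - Real.sqrt (h₂ u / Z₂)) ^ 2 ∂μ₀)
      ≤ ∫ u, 2 / Z₁ * (Real.sqrt (h₁ u) - Real.sqrt (h₂ u)) ^ 2 + c * h₂ u ∂μ₀ :=
        integral_mono_of_nonneg (Filter.Eventually.of_forall fun _ => sq_nonneg _)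
          (hsq.add hlin) (Filter.Eventually.of_forall fun u =>
            Real.sq_sqrt_div_sub_sqrt_div_le (hpos₂ u) hZ₁pos.le)
    _ = (2 / Z₁) * (∫ u, (Real.sqrt (h₁ u) - Real.sqrt (h₂ u)) ^ 2 ∂μ₀) + c * Z₂ := by
        rw [integral_add hsq hlin, integral_const_mul, integral_const_mul, hZ₂]
    _ = _ := by ring

/-- For measurable `h₁, h₂ : X → [0,∞)` with `0 < Z_i = ∫ h_i dμ₀ < ∞`, the
probability measures `μ_i` with densities `h_i/Z_i` satisfy
`2 d_Hell(μ₁,μ₂)² ≤ (2/Z₁) ∫ (√h₁ − √h₂)² dμ₀ + 2 Z₂ (Z₁^{−1/2} − Z₂^{−1/2})²`.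
Here `2 d_Hell(μ₁,μ₂)² = ∫ (√(h₁/Z₁) − √(h₂/Z₂))² dμ₀`. -/
theorem hellinger_splitting_bound
    {X : Type*} [MeasurableSpace X] (μ₀ : Measure X) [IsProbabilityMeasure μ₀]
    (h₁ h₂ : X → ℝ)
    (hm₁ : Measurable h₁) (hm₂ : Measurable h₂)
    (hpos₁ : ∀ u : X, 0 ≤ h₁ u) (hpos₂ : ∀ u : X, 0 ≤ h₂ u)
    (hint₁ : Integrable h₁ μ₀) (hint₂ : Integrable h₂ μ₀)
    (Z₁ Z₂ : ℝ) (hZ₁ : Z₁ = ∫ u, h₁ u ∂μ₀) (hZ₂ : Z₂ = ∫ u, h₂ u ∂μ₀)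
    (hZ₁pos : 0 < Z₁) (hZ₂pos : 0 < Z₂) :
    (∫ u, (Real.sqrt (h₁ u / Z₁) - Real.sqrt (h₂ u / Z₂)) ^ 2 ∂μ₀)
      ≤ (2 / Z₁) * (∫ u, (Real.sqrt (h₁ u) - Real.sqrt (h₂ u)) ^ 2 ∂μ₀)
        + 2 * Z₂ * ((Real.sqrt Z₁)⁻¹ - (Real.sqrt Z₂)⁻¹) ^ 2 :=
  hellinger_splitting_bound_general μ₀ h₁ h₂ hpos₂ hint₁ hint₂ Z₁ Z₂ hZ₂ hZ₁pos
end
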